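/- Let $(M, \tau, \eta, H)$ be a cocontact Hamiltonian system with Darboux coordinates $(t, q^i, p_i, s)$ where $\tau = \mathrm{d}t$ and $\eta = \mathrm{d}s - p_i\,\mathrm{d}q^i$. Set $\Theta = H\tau + \eta$ and $\omega = \tau$, with dissipation form $\sigma_\Theta = \frac{\partial H}{\partial s}\mathrm{d}t$ and $\overline{\mathrm{d}}\Theta = \mathrm{d}\Theta + \sigma_\Theta\wedge\Theta$. Then a vector field $X$ on $M$ satisfies the multicontact field equations $i(X)\Theta = 0$, $i(X)\overline{\mathrm{d}}\Theta = 0$, and $i(X)\omega = 1$ if and only if $X = \frac{\partial}{\partial t} + \frac{\partial H}{\partial p_i}\frac{\partial}{\partial q^i} - \Big(\frac{\partial H}{\partial q^i} + p_i\frac{\partial H}{\partial s}\Big)\frac{\partial}{\partial p_i} + \Big(p_i\frac{\partial H}{\partial p_i} - H\Big)\frac{\partial}{\partial s}$, i.e. $X$ is the cocontact Hamiltonian vector field $X_H$. -/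
import Mathlib


noncomputable section

open scoped BigOperators

/-- The Darboux coordinate model `(t, qⁱ, p_i, s)` of a cocontact manifold of
dimension `2n+2`. -/
abbrev CPt (n : ℕ) : Type := ℝ × (Fin n → ℝ) × (Fin n → ℝ) × ℝ

namespace Cocontact

variable {n : ℕ}

/-- Wedge product of a family of covectors, as an alternating form. -/
def wedgeCov {E : Type} [AddCommGroup E] [Module ℝ E] {j : ℕ}
    (ℓ : Fin j → (E →ₗ[ℝ] ℝ)) : AlternatingMap ℝ E ℝ (Fin j) :=
  (Matrix.detRowAlternating : (Fin j → ℝ) [⋀^Fin j]→ₗ[ℝ] ℝ).compLinearMap (LinearMap.pi ℓ)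

/-- A covector as a `1`-form. -/
def covF1 {E : Type} [AddCommGroup E] [Module ℝ E] (ℓ : E →ₗ[ℝ] ℝ) :
    AlternatingMap ℝ E ℝ (Fin 1) :=
  AlternatingMap.ofSubsingleton ℝ E ℝ (0 : Fin 1) ℓ

/-- Coordinate covector `dt`. -/
def dtc : CPt n →ₗ[ℝ] ℝ := LinearMap.fst ℝ _ _

/-- Coordinate covector `dqⁱ`. -/
def dqc (i : Fin n) : CPt n →ₗ[ℝ] ℝ :=
  (LinearMap.proj i).comp ((LinearMap.fst ℝ _ _).comp (LinearMap.snd ℝ _ _))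

/-- Coordinate covector `dp_i`. -/
def dpc (i : Fin n) : CPt n →ₗ[ℝ] ℝ :=
  (LinearMap.proj i).comp ((LinearMap.fst ℝ _ _).comp
    ((LinearMap.snd ℝ _ _).comp (LinearMap.snd ℝ _ _)))

/-- Coordinate covector `ds`. -/
def dsc : CPt n →ₗ[ℝ] ℝ :=
  (LinearMap.snd ℝ _ _).comp ((LinearMap.snd ℝ _ _).comp (LinearMap.snd ℝ _ _))

variable (H : CPt n → ℝ)

/-- Partial derivatives of the Hamiltonian. -/
def Hq (i : Fin n) (e : CPt n) : ℝ := fderiv ℝ H e (0, Pi.single i 1, 0, 0)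

def Hp (i : Fin n) (e : CPt n) : ℝ := fderiv ℝ H e (0, 0, Pi.single i 1, 0)

def Hs (e : CPt n) : ℝ := fderiv ℝ H e (0, 0, 0, 1)

/-- The multicontact `1`-form `Θ = H τ + η = H dt + ds - p_i dqⁱ`. -/
def Theta (e : CPt n) : AlternatingMap ℝ (CPt n) ℝ (Fin 1) :=
  covF1 (H e • dtc + dsc - ∑ i, e.2.2.1 i • dqc i)

/-- The form `d̄Θ = dΘ + σ_Θ ∧ Θ`, where `σ_Θ = (∂H/∂s) dt`; in coordinates
`d̄Θ = (∂H/∂qⁱ + p_i ∂H/∂s) dqⁱ∧dt + (∂H/∂p_i) dp_i∧dt + dqⁱ∧dp_i`. -/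
def dbarTheta (e : CPt n) : AlternatingMap ℝ (CPt n) ℝ (Fin 2) :=
  (∑ i, (Hq H i e + e.2.2.1 i * Hs H e) • wedgeCov ![dqc i, dtc])
    + (∑ i, Hp H i e • wedgeCov ![dpc i, dtc])
    + ∑ i, wedgeCov ![dqc i, dpc i]

end Cocontact

open Cocontact

namespace Cocontact

variable {n : ℕ}

lemma wedgeCov_two_apply {E : Type} [AddCommGroup E] [Module ℝ E]
    (a b : E →ₗ[ℝ] ℝ) (u v : E) :
    wedgeCov ![a, b] ![u, v] = a u * b v - a v * b u := by
  show Matrix.det (Matrix.of ![fun j => ![a, b] j u, fun j => ![a, b] j v]) = _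
  rw [Matrix.det_fin_two]
  simp
  ring

@[simp] lemma dtc_apply (u : CPt n) : dtc u = u.1 := rfl
@[simp] lemma dqc_apply (i : Fin n) (u : CPt n) : dqc i u = u.2.1 i := rfl
@[simp] lemma dpc_apply (i : Fin n) (u : CPt n) : dpc i u = u.2.2.1 i := rfl
@[simp] lemma dsc_apply (u : CPt n) : dsc u = u.2.2.2 := rfl

lemma covF1_apply {E : Type} [AddCommGroup E] [Module ℝ E] (ℓ : E →ₗ[ℝ] ℝ) (u : E) :
    covF1 ℓ ![u] = ℓ u := rfl

lemma altSum_apply {E : Type} [AddCommGroup E] [Module ℝ E] {j : ℕ} {α : Type*}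
    (s : Finset α) (f : α → AlternatingMap ℝ E ℝ (Fin j)) (m : Fin j → E) :
    (∑ i ∈ s, f i) m = ∑ i ∈ s, f i m := by
  induction s using Finset.cons_induction with
  | empty => simp
  | cons a s ha ih => simp [Finset.sum_cons, ih]

lemma theta_apply (H : CPt n → ℝ) (e u : CPt n) :
    Theta H e ![u] = H e * u.1 + u.2.2.2 - ∑ i, e.2.2.1 i * u.2.1 i := by
  rw [Theta, covF1_apply]
  simp [LinearMap.sum_apply]

lemma dbar_apply (H : CPt n → ℝ) (e u v : CPt n) :
    dbarTheta H e ![u, v] =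
      (∑ i, (Hq H i e + e.2.2.1 i * Hs H e) * (u.2.1 i * v.1 - v.2.1 i * u.1))
      + (∑ i, Hp H i e * (u.2.2.1 i * v.1 - v.2.2.1 i * u.1))
      + ∑ i, (u.2.1 i * v.2.2.1 i - v.2.1 i * u.2.2.1 i) := by
  simp only [dbarTheta, AlternatingMap.add_apply, altSum_apply,
    AlternatingMap.smul_apply, wedgeCov_two_apply, smul_eq_mul,
    dtc_apply, dqc_apply, dpc_apply]

end Cocontact

/-- On a cocontact Hamiltonian system in Darboux coordinates
(`τ = dt`, `η = ds - p_i dqⁱ`), with `Θ = Hτ + η`, `ω = τ` and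
`d̄Θ = dΘ + (∂H/∂s) dt ∧ Θ`, a vector field `X` satisfies the multicontact field equations
`i(X)Θ = 0`, `i(X)d̄Θ = 0`, `i(X)ω = 1` if and only if `X` is the cocontact Hamiltonian
vector field
`X_H = ∂/∂t + (∂H/∂p_i) ∂/∂qⁱ - (∂H/∂qⁱ + p_i ∂H/∂s) ∂/∂p_i + (p_i ∂H/∂p_i - H) ∂/∂s`. -/
theorem multicontact_equations_iff_cocontact_hamiltonian_vf
    {n : ℕ} (H : CPt n → ℝ) (hH : ContDiff ℝ (⊤ : ℕ∞) H) (X : CPt n → CPt n) :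
    ((∀ e, Theta H e ![X e] = 0) ∧
      (∀ e (v : CPt n), dbarTheta H e ![X e, v] = 0) ∧
      (∀ e, (X e).1 = 1)) ↔
    (∀ e : CPt n, X e =
      (1, fun i => Hp H i e,
        fun i => -(Hq H i e + e.2.2.1 i * Hs H e),
        (∑ i, e.2.2.1 i * Hp H i e) - H e)) := by
  constructor
  · rintro ⟨h1, h2, h3⟩ e
    have hx0 : (X e).1 = 1 := h3 e
    have hq : ∀ j, (X e).2.1 j = Hp H j e := by
      intro j
      have := h2 e (0, 0, Pi.single j 1, 0)
      rw [dbar_apply] at this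
      simp [Pi.single_apply, Finset.sum_ite_eq', hx0] at this
      linarith
    have hp : ∀ j, (X e).2.2.1 j = -(Hq H j e + e.2.2.1 j * Hs H e) := by
      intro j
      have := h2 e (0, Pi.single j 1, 0, 0)
      rw [dbar_apply] at this
      simp [Pi.single_apply, Finset.sum_ite_eq', hx0] at this
      linarith
    have hs : (X e).2.2.2 = (∑ i, e.2.2.1 i * Hp H i e) - H e := by
      have := h1 e
      rw [theta_apply] at this
      have hsum : ∑ i, e.2.2.1 i * (X e).2.1 i = ∑ i, e.2.2.1 i * Hp H i e := by
        exact Finset.sum_congr rfl fun i _ => by rw [hq i]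
      rw [hx0, hsum] at this
      linarith
    refine Prod.ext hx0 (Prod.ext (funext hq) (Prod.ext (funext hp) hs))
  · intro hX
    refine ⟨fun e => ?_, fun e v => ?_, fun e => by rw [hX e]⟩
    · rw [theta_apply, hX e]
      simp [Finset.mul_sum]
    · rw [dbar_apply, hX e]
      simp only
      rw [← Finset.sum_add_distrib, ← Finset.sum_add_distrib]
      rw [Finset.sum_eq_zero]
      intro i _
      ring
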